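/- Let d,K ∈ ℕ, L ∈ ℝ, let 𝒪 ∈ ℬ(ℝ^d)\{∅} be a nonempty Borel set, let f_k : 𝒪 × ℝ → ℝ, k ∈ {0,…,K}, be Borel measurable with |f_k(x,a) − f_k(x,b)| ≤ L|a − b| for all k, x, a, b, let g : 𝒪 → ℝ be Borel measurable, let (S,𝒮) be a measurable space, let φ_k : 𝒪 × S → 𝒪 be jointly measurable, let W_k : Ω → S, k ∈ {0,…,K}, be independent random variables on a probability space (Ω,ℱ,ℙ), define X^{k,x}_l by X^{k,x}_k = x and X^{k,x}_l = φ_l(X^{k,x}_{l+1}, W_l) for l < k, assume E[|g(X^{k,x}_0)|² + Σ_{l=0}^{k−1} |f_l(X^{k,x}_l,0)|²] < ∞ for all k, x, and let v_k : 𝒪 → ℝ be Borel measurable functions satisfying v_0 = g and v_k(x) = E[f_{k−1}(X^{k,x}_{k−1}, v_{k−1}(X^{k,x}_{k−1}))] for all k ∈ {1,…,K}, x ∈ 𝒪. Then for all k,l ∈ {0,…,K} with k ≥ l and all x ∈ 𝒪 it holds that E[|v_l(X^{k,x}_l)|] + Σ_{s=l}^{k−1} E[|f_s(X^{k,x}_s,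 v_s(X^{k,x}_s)) − v_s(X^{k,x}_s)|] < ∞ and v_k(x) = E[v_l(X^{k,x}_l)] + Σ_{s=l}^{k−1} E[f_s(X^{k,x}_s, v_s(X^{k,x}_s)) − v_s(X^{k,x}_s)]. -/

import Mathlib

/-!
`X^{k,x}_{s+1}` is a measurable function of `W_{s+1}, …, W_{k-1}`, hence independent of `W_s`.
Freezing `X^{k,x}_{s+1}` in the recursion for `v_{s+1}` (Fubini for the product law of
`(X^{k,x}_{s+1}, W_s)`) gives `E[v_{s+1}(X^{k,x}_{s+1})] = E[f_s(X^{k,x}_s, v_s(X^{k,x}_s))]`,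
together with the integrability of the left side. Integrability thus climbs from `v_0 = g`
through the Lipschitz bound `|f_s(y, a)| ≤ |f_s(y, 0)| + L |a|`, whose base terms are square
integrable by assumption, and the representation is a telescoping sum.
-/

open MeasureTheory ProbabilityTheory

namespace MeasureTheory

variable {Ω : Type*} [MeasurableSpace Ω] {P : Measure Ω} {k : ℕ}

theorem integrable_of_sq_le [IsFiniteMeasure P] {u Q : Ω → ℝ} (hu : AEStronglyMeasurable u P)
    (hQ : ∫⁻ ω, ENNReal.ofReal (Q ω) ∂P < ⊤) (huQ : ∀ ω, u ω ^ 2 ≤ Q ω) : Integrable u P := by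
  refine ((memLp_two_iff_integrable_sq hu).2 ⟨hu.pow 2, ?_⟩).integrable one_le_two
  rw [hasFiniteIntegral_iff_ofReal (.of_forall fun ω => sq_nonneg (u ω))]
  exact (lintegral_mono fun ω => ENNReal.ofReal_le_ofReal (huQ ω)).trans_lt hQ

theorem Integrable.comp_of_lipschitz {F : Ω → ℝ → ℝ} {u : Ω → ℝ} {L : ℝ} (hu : Integrable u P)
    (hF : ∀ ω a b, |F ω a - F ω b| ≤ L * |a - b|) (hF0 : Integrable (fun ω => F ω 0) P)
    (hmeas : AEStronglyMeasurable (fun ω => F ω (u ω)) P) :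
    Integrable (fun ω => F ω (u ω)) P := by
  refine (hF0.abs.add (hu.abs.const_mul L)).mono' hmeas (.of_forall fun ω => ?_)
  have hlip := hF ω (u ω) 0
  rw [sub_zero] at hlip
  rw [Real.norm_eq_abs, Pi.add_apply]
  linarith [abs_sub_abs_le_abs_sub (F ω (u ω)) (F ω 0)]

theorem integrable_of_sq_le_add_sum_sq [IsFiniteMeasure P] {u : Ω → ℝ} {w : ℕ → Ω → ℝ}
    (hu : AEStronglyMeasurable u P) (hw : ∀ l < k, AEStronglyMeasurable (w l) P)
    (hfin : ∫⁻ ω, ENNReal.ofReal (u ω ^ 2 + ∑ l ∈ Finset.range k, w l ω ^ 2) ∂P < ⊤) :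
    Integrable u P ∧ ∀ l < k, Integrable (w l) P := by
  have hsum (ω : Ω) : 0 ≤ ∑ l ∈ Finset.range k, w l ω ^ 2 :=
    Finset.sum_nonneg fun l _ => sq_nonneg (w l ω)
  refine ⟨integrable_of_sq_le hu hfin fun ω => le_add_of_nonneg_right (hsum ω),
    fun l hl => integrable_of_sq_le (hw l hl) hfin fun ω => ?_⟩
  have := Finset.single_le_sum (fun j _ => sq_nonneg (w j ω)) (Finset.mem_range.2 hl)
  linarith [sq_nonneg (u ω)]

end MeasureTheory

namespace ProbabilityTheory

variable {Ω α β : Type*} [MeasurableSpace Ω] [MeasurableSpace α] [MeasurableSpace β]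
  {P : Measure Ω} {Y : Ω → α} {Z : Ω → β} {h : α × β → ℝ}

theorem integral_comp_eq_integral_map (hZ : AEMeasurable Z P) (hh : Measurable h) (y : α) :
    ∫ ω, h (y, Z ω) ∂P = ∫ z, h (y, z) ∂(P.map Z) :=
  (integral_map hZ (hh.comp measurable_prodMk_left).aestronglyMeasurable).symm

theorem IndepFun.integrable_prod_map_iff [IsFiniteMeasure P] (hYZ : IndepFun Y Z P)
    (hY : AEMeasurable Y P) (hZ : AEMeasurable Z P) (hh : Measurable h) :
    Integrable h ((P.map Y).prod (P.map Z)) ↔ Integrable (fun ω => h (Y ω, Z ω)) P := by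
  rw [← (indepFun_iff_map_prod_eq_prod_map_map hY hZ).1 hYZ]
  exact integrable_map_measure hh.aestronglyMeasurable (hY.prodMk hZ)

theorem IndepFun.integrable_integral_comp [IsFiniteMeasure P] (hYZ : IndepFun Y Z P)
    (hY : AEMeasurable Y P) (hZ : AEMeasurable Z P) (hh : Measurable h)
    (hint : Integrable (fun ω => h (Y ω, Z ω)) P) :
    Integrable (fun ω => ∫ ω', h (Y ω, Z ω') ∂P) P := by
  simp_rw [integral_comp_eq_integral_map hZ hh]
  have := ((hYZ.integrable_prod_map_iff hY hZ hh).2 hint).integral_prod_left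
  exact (integrable_map_measure this.aestronglyMeasurable hY).1 this

theorem IndepFun.integral_comp_eq_integral_integral [IsFiniteMeasure P] (hYZ : IndepFun Y Z P)
    (hY : AEMeasurable Y P) (hZ : AEMeasurable Z P) (hh : Measurable h)
    (hint : Integrable (fun ω => h (Y ω, Z ω)) P) :
    ∫ ω, h (Y ω, Z ω) ∂P = ∫ ω, ∫ ω', h (Y ω, Z ω') ∂P ∂P := by
  have hprod := (hYZ.integrable_prod_map_iff hY hZ hh).2 hint
  simp_rw [integral_comp_eq_integral_map hZ hh]
  rw [← integral_map (hY.prodMk hZ) hh.aestronglyMeasurable,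
    (indepFun_iff_map_prod_eq_prod_map_map hY hZ).1 hYZ, integral_prod _ hprod,
    integral_map hY hprod.integral_prod_left.aestronglyMeasurable]

theorem IndepFun.integrable_and_integral_comp_eq [IsFiniteMeasure P] {w : α → ℝ}
    (hYZ : IndepFun Y Z P) (hY : AEMeasurable Y P) (hZ : AEMeasurable Z P) (hh : Measurable h)
    (hw : ∀ y, w y = ∫ ω, h (y, Z ω) ∂P) (hint : Integrable (fun ω => h (Y ω, Z ω)) P) :
    Integrable (fun ω => w (Y ω)) P ∧ ∫ ω, w (Y ω) ∂P = ∫ ω, h (Y ω, Z ω) ∂P := by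
  simp only [hw]
  exact ⟨hYZ.integrable_integral_comp hY hZ hh hint,
    (hYZ.integral_comp_eq_integral_integral hY hZ hh hint).symm⟩

end ProbabilityTheory

section Telescoping

variable {Ω : Type*} [MeasurableSpace Ω] {P : Measure Ω} {a b : ℕ → Ω → ℝ} {k : ℕ}

theorem integrable_of_integrable_zero_of_step (ha0 : Integrable (a 0) P)
    (hab : ∀ s < k, Integrable (a s) P → Integrable (b s) P)
    (hba : ∀ s < k, Integrable (b s) P → Integrable (a (s + 1)) P) :
    ∀ s ≤ k, Integrable (a s) P
  | 0, _ => ha0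
  | s + 1, hs =>
    hba s hs (hab s hs (integrable_of_integrable_zero_of_step ha0 hab hba s (by omega)))

theorem integral_eq_integral_add_sum_Ico_integral_sub
    (ha : ∀ s < k, Integrable (a s) P) (hb : ∀ s < k, Integrable (b s) P)
    (hab : ∀ s < k, ∫ ω, a (s + 1) ω ∂P = ∫ ω, b s ω ∂P) {l : ℕ} (hl : l ≤ k) :
    ∫ ω, a k ω ∂P = ∫ ω, a l ω ∂P + ∑ s ∈ Finset.Ico l k, ∫ ω, (b s ω - a s ω) ∂P := by
  have hstep : ∀ s ∈ Finset.Ico l k,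
      ∫ ω, (b s ω - a s ω) ∂P = ∫ ω, a (s + 1) ω ∂P - ∫ ω, a s ω ∂P := fun s hs => by
    have hsk := (Finset.mem_Ico.1 hs).2
    rw [integral_sub (hb s hsk) (ha s hsk), hab s hsk]
  rw [Finset.sum_congr rfl hstep, Finset.sum_Ico_sub (fun s => ∫ ω, a s ω ∂P) hl]
  ring

end Telescoping

section BackwardRecursion

variable {Ω E S : Type*} [MeasurableSpace E] [mS : MeasurableSpace S] {W : ℕ → Ω → S}
  {φ : ℕ → E → S → E} {Y : ℕ → Ω → E} {k : ℕ}

theorem measurable_iSup_comap_Ico_of_backward_recursion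
    (hφ : ∀ l < k, Measurable (fun q : E × S => φ l q.1 q.2)) (c : E) (hYk : ∀ ω, Y k ω = c)
    (hY : ∀ l < k, ∀ ω, Y l ω = φ l (Y (l + 1) ω) (W l ω)) {l : ℕ} (hl : l ≤ k) :
    Measurable[⨆ j ∈ Finset.Ico l k, mS.comap (W j)] (Y l) := by
  induction hl using Nat.decreasingInduction with
  | self => exact funext hYk ▸ measurable_const
  | of_succ l hl ih =>
    have hW : Measurable[⨆ j ∈ Finset.Ico l k, mS.comap (W j)] (W l) :=
      (comap_measurable (W l)).mono
        (le_iSup₂ (f := fun j (_ : j ∈ Finset.Ico l k) => mS.comap (W j)) l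
          (Finset.mem_Ico.2 ⟨le_rfl, hl⟩)) le_rfl
    have hsucc : (⨆ j ∈ Finset.Ico (l + 1) k, mS.comap (W j)) ≤
        ⨆ j ∈ Finset.Ico l k, mS.comap (W j) :=
      biSup_mono fun j hj => Finset.Ico_subset_Ico_left l.le_succ hj
    rw [funext (hY l hl)]
    exact (hφ l hl).comp ((ih.mono hsucc le_rfl).prodMk hW)

variable [MeasurableSpace Ω] {P : Measure Ω}

theorem measurable_of_backward_recursion (hW : ∀ j, Measurable (W j))
    (hφ : ∀ l < k, Measurable (fun q : E × S => φ l q.1 q.2)) (c : E) (hYk : ∀ ω, Y k ω = c)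
    (hY : ∀ l < k, ∀ ω, Y l ω = φ l (Y (l + 1) ω) (W l ω)) {l : ℕ} (hl : l ≤ k) :
    Measurable (Y l) :=
  (measurable_iSup_comap_Ico_of_backward_recursion hφ c hYk hY hl).mono
    (iSup₂_le fun j _ => (hW j).comap_le) le_rfl

theorem indep_iSup_comap_of_notMem {K : ℕ} (hW : ∀ j, Measurable (W j))
    (hind : iIndepFun (fun i : Fin (K + 1) => W i) P) {T : Finset ℕ} (hT : ∀ j ∈ T, j ≤ K)
    {s : ℕ} (hs : s ≤ K) (hsT : s ∉ T) :
    Indep (⨆ j ∈ T, mS.comap (W j)) (mS.comap (W s)) P := by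
  let T' : Set (Fin (K + 1)) := {i | (i : ℕ) ∈ T}
  have hdisj : Disjoint T' {⟨s, by omega⟩} := Set.disjoint_singleton_right.2 hsT
  have := indep_iSup_of_disjoint (fun i : Fin (K + 1) => (hW i).comap_le) hind.iIndep hdisj
  rw [iSup_singleton] at this
  refine indep_of_indep_of_le_left this (iSup₂_le fun j hj => ?_)
  exact le_iSup₂_of_le (f := fun (i : Fin (K + 1)) (_ : i ∈ T') => mS.comap (W i))
    ⟨j, Nat.lt_succ_of_le (hT j hj)⟩ hj le_rfl

theorem indepFun_of_backward_recursion {K : ℕ} (hW : ∀ j, Measurable (W j))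
    (hind : iIndepFun (fun i : Fin (K + 1) => W i) P) (hk : k ≤ K)
    (hφ : ∀ l < k, Measurable (fun q : E × S => φ l q.1 q.2)) (c : E) (hYk : ∀ ω, Y k ω = c)
    (hY : ∀ l < k, ∀ ω, Y l ω = φ l (Y (l + 1) ω) (W l ω)) {s : ℕ} (hs : s < k) :
    IndepFun (Y (s + 1)) (W s) P := by
  rw [IndepFun_iff_Indep]
  refine indep_of_indep_of_le_left (indep_iSup_comap_of_notMem hW hind
    (T := Finset.Ico (s + 1) k) (fun j hj => by grind) (by omega) (by simp)) ?_
  exact (measurable_iSup_comap_Ico_of_backward_recursion hφ c hYk hY hs).comap_le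

end BackwardRecursion

theorem exact_solution_alternative_representation_general
    (d K : ℕ) (L : ℝ)
    (O : Set (Fin d → ℝ))
    (f : ℕ → O → ℝ → ℝ) (hf : ∀ k, k ≤ K → Measurable (fun q : O × ℝ => f k q.1 q.2))
    (hfL : ∀ (k : ℕ) (x : O) (a b : ℝ), k ≤ K → |f k x a - f k x b| ≤ L * |a - b|)
    (g : O → ℝ) (hg : Measurable g)
    {S : Type*} [MeasurableSpace S]
    (φ : ℕ → O → S → O) (hφ : ∀ k, k ≤ K → Measurable (fun q : O × S => φ k q.1 q.2))
    {Ω : Type*} [MeasurableSpace Ω] (P : Measure Ω) [IsProbabilityMeasure P]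
    (W : ℕ → Ω → S) (hWmeas : ∀ k, Measurable (W k))
    (hWindep : iIndepFun
      (fun k : Fin (K + 1) => W k) P)
    (X : ℕ → ℕ → O → Ω → O)
    (hXk : ∀ (k : ℕ) (x : O) (ω : Ω), k ≤ K → X k k x ω = x)
    (hXl : ∀ (k l : ℕ) (x : O) (ω : Ω), l < k → k ≤ K →
      X k l x ω = φ l (X k (l + 1) x ω) (W l ω))
    (hBound : ∀ (k : ℕ) (x : O), k ≤ K →
      ∫⁻ ω, ENNReal.ofReal ((g (X k 0 x ω)) ^ 2
        + ∑ l ∈ Finset.range k, (f l (X k l x ω) 0) ^ 2) ∂P < ⊤)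
    (v : ℕ → O → ℝ) (hvmeas : ∀ k, k ≤ K → Measurable (v k))
    (hv0 : ∀ x : O, v 0 x = g x)
    (hvrec : ∀ (k : ℕ) (x : O), 1 ≤ k → k ≤ K →
      v k x = ∫ ω, f (k - 1) (X k (k - 1) x ω) (v (k - 1) (X k (k - 1) x ω)) ∂P) :
    ∀ (k l : ℕ) (x : O), l ≤ k → k ≤ K →
      (Integrable (fun ω => v l (X k l x ω)) P ∧
        ∀ s : ℕ, l ≤ s → s < k →
          Integrable (fun ω => f s (X k s x ω) (v s (X k s x ω)) - v s (X k s x ω)) P) ∧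
      v k x = (∫ ω, v l (X k l x ω) ∂P)
        + ∑ s ∈ Finset.Ico l k,
            ∫ ω, (f s (X k s x ω) (v s (X k s x ω)) - v s (X k s x ω)) ∂P := by
  intro k l x hlk hkK
  have hφk : ∀ s < k, Measurable (fun q : O × S => φ s q.1 q.2) := fun s hs => hφ s (by omega)
  have hrec : ∀ s < k, ∀ ω, X k s x ω = φ s (X k (s + 1) x ω) (W s ω) :=
    fun s hs ω => hXl k s x ω hs hkK
  have hX : ∀ s ≤ k, Measurable (X k s x) := fun s hs =>
    measurable_of_backward_recursion hWmeas hφk x (hXk k x · hkK) hrec hs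
  let A : ℕ → Ω → ℝ := fun s ω => v s (X k s x ω)
  let B : ℕ → Ω → ℝ := fun s ω => f s (X k s x ω) (v s (X k s x ω))
  obtain ⟨hA0, hf0⟩ := integrable_of_sq_le_add_sum_sq (u := fun ω => g (X k 0 x ω))
    (w := fun s ω => f s (X k s x ω) 0) (hg.comp (hX 0 (by omega))).aestronglyMeasurable
    (fun s hs =>
      ((hf s (by omega)).comp ((hX s hs.le).prodMk measurable_const)).aestronglyMeasurable)
    (hBound k x hkK)
  have hAB : ∀ s < k, Integrable (A s) P → Integrable (B s) P := fun s hs hAs =>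
    hAs.comp_of_lipschitz (fun ω a b => hfL s (X k s x ω) a b (by omega)) (hf0 s hs)
      ((hf s (by omega)).comp ((hX s hs.le).prodMk
        ((hvmeas s (by omega)).comp (hX s hs.le)))).aestronglyMeasurable
  have hBA : ∀ s < k, Integrable (B s) P →
      Integrable (A (s + 1)) P ∧ ∫ ω, A (s + 1) ω ∂P = ∫ ω, B s ω ∂P := by
    intro s hs hBs
    have hv (y : O) : v (s + 1) y = ∫ ω, f s (φ s y (W s ω)) (v s (φ s y (W s ω))) ∂P := by
      rw [hvrec (s + 1) y (by omega) (by omega), Nat.add_sub_cancel]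
      simp only [hXl (s + 1) s y _ (by omega) (by omega), hXk (s + 1) y _ (by omega)]
    have hindep : IndepFun (X k (s + 1) x) (W s) P :=
      indepFun_of_backward_recursion hWmeas hWindep hkK hφk x (hXk k x · hkK) hrec hs
    simp only [A, B, hrec s hs] at hBs ⊢
    exact hindep.integrable_and_integral_comp_eq (hX _ hs).aemeasurable (hWmeas s).aemeasurable
      ((hf s (by omega)).comp ((hφk s hs).prodMk ((hvmeas s (by omega)).comp (hφk s hs)))) hv hBs
  have hA := integrable_of_integrable_zero_of_step (by simpa [A, hv0] using hA0) hAB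
    (fun s hs hBs => (hBA s hs hBs).1)
  have hB : ∀ s < k, Integrable (B s) P := fun s hs => hAB s hs (hA s hs.le)
  refine ⟨⟨hA l hlk, fun s _ hsk => (hB s hsk).sub (hA s hsk.le)⟩, ?_⟩
  have := integral_eq_integral_add_sum_Ico_integral_sub (fun s hs => hA s hs.le) hB
    (fun s hs => (hBA s hs (hB s hs)).2) hlk
  simpa [A, B, hXk k x _ hkK] using this

theorem exact_solution_alternative_representation
    (d K : ℕ) (hd : 0 < d) (hK : 0 < K) (L : ℝ)
    (O : Set (Fin d → ℝ)) (hOmeas : MeasurableSet O) (hOne : O.Nonempty)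
    (f : ℕ → O → ℝ → ℝ) (hf : ∀ k, k ≤ K → Measurable (fun q : O × ℝ => f k q.1 q.2))
    (hfL : ∀ (k : ℕ) (x : O) (a b : ℝ), k ≤ K → |f k x a - f k x b| ≤ L * |a - b|)
    (g : O → ℝ) (hg : Measurable g)
    {S : Type*} [MeasurableSpace S]
    (φ : ℕ → O → S → O) (hφ : ∀ k, k ≤ K → Measurable (fun q : O × S => φ k q.1 q.2))
    {Ω : Type*} [MeasurableSpace Ω] (P : Measure Ω) [IsProbabilityMeasure P]
    (W : ℕ → Ω → S) (hWmeas : ∀ k, Measurable (W k))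
    (hWindep : iIndepFun
      (fun k : Fin (K + 1) => W k) P)
    (X : ℕ → ℕ → O → Ω → O)
    (hXk : ∀ (k : ℕ) (x : O) (ω : Ω), k ≤ K → X k k x ω = x)
    (hXl : ∀ (k l : ℕ) (x : O) (ω : Ω), l < k → k ≤ K →
      X k l x ω = φ l (X k (l + 1) x ω) (W l ω))
    (hBound : ∀ (k : ℕ) (x : O), k ≤ K →
      ∫⁻ ω, ENNReal.ofReal ((g (X k 0 x ω)) ^ 2
        + ∑ l ∈ Finset.range k, (f l (X k l x ω) 0) ^ 2) ∂P < ⊤)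
    (v : ℕ → O → ℝ) (hvmeas : ∀ k, k ≤ K → Measurable (v k))
    (hv0 : ∀ x : O, v 0 x = g x)
    (hvrec : ∀ (k : ℕ) (x : O), 1 ≤ k → k ≤ K →
      v k x = ∫ ω, f (k - 1) (X k (k - 1) x ω) (v (k - 1) (X k (k - 1) x ω)) ∂P) :
    ∀ (k l : ℕ) (x : O), l ≤ k → k ≤ K →
      (Integrable (fun ω => v l (X k l x ω)) P ∧
        ∀ s : ℕ, l ≤ s → s < k →
          Integrable (fun ω => f s (X k s x ω) (v s (X k s x ω)) - v s (X k s x ω)) P) ∧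
      v k x = (∫ ω, v l (X k l x ω) ∂P)
        + ∑ s ∈ Finset.Ico l k,
            ∫ ω, (f s (X k s x ω) (v s (X k s x ω)) - v s (X k s x ω)) ∂P :=
  exact_solution_alternative_representation_general d K L O f hf hfL g hg φ hφ P W hWmeas hWindep X
    hXk hXl hBound v hvmeas hv0 hvrec
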